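/- arXiv:1309.5543 — 3 statements merged into one kernel-verified Lean document; each statement's English description precedes it below -/
import Mathlib

section
/- Let D be a bounded open connected set in ℝ^d and let X : closure(D) → closure(D) be continuous, C¹ on D with bounded continuous first derivatives, with X(x) = x for x ∈ ∂D. Suppose det DX ≥ 0 on D and X restricted to a neighborhood of each point of D is a homeomorphism onto its image. Then Vol(D) = ∫_D det DX(x) dx. -/
/-!
For small `s`, the straight-line homotopy `g_s z = z + s • (X z - z)` is a diffeomorphism of `D`
onto itself. Since `X` fixes `∂D` and has bounded derivative, the displacement `X z - z` is
Lipschitz on `closure D` and small compared with the distance to the complement of `D`; so `g_s`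
is injective on `closure D` and maps `D` into `D`. Its derivative is close to the identity, so
`g_s` is open on `D` with positive Jacobian, and connectedness of `D` forces `g_s '' D = D`. The
change of variables formula then gives `∫_D det Dg_s = Vol D` for all small `s`. The integrand is
a polynomial in `s` of degree at most `d`, so by Lagrange interpolation the identity persists
for every `s`, in particular at `s = 1`, where `g_1 = X`.
-/

open MeasureTheory Set AffineMap
open scoped ENNReal

section NormedSpace

variable {E F : Type*} [NormedAddCommGroup E] [NormedSpace ℝ E]
  [NormedAddCommGroup F] [NormedSpace ℝ F]

theorem norm_sub_le_of_hasFDerivAt_lineMap {f : E → F} {f' : E → E →L[ℝ] F} {x y : E} {C : ℝ}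
    (hf : ContinuousOn f (segment ℝ x y))
    (hf' : ∀ t ∈ Ico (0 : ℝ) 1, HasFDerivAt f (f' (lineMap x y t)) (lineMap x y t))
    (hC : ∀ t ∈ Ico (0 : ℝ) 1, ‖f' (lineMap x y t)‖ ≤ C) :
    ‖f y - f x‖ ≤ C * ‖y - x‖ := by
  have key := norm_image_sub_le_of_norm_deriv_right_le_segment
    (f := f ∘ lineMap x y) (f' := fun t => f' (lineMap x y t) (y - x)) (C := C * ‖y - x‖)
    (hf.comp lineMap_continuous.continuousOn fun t ht => lineMap_mem_segment ℝ x y ht)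
    (fun t ht => ((hf' t ht).comp_hasDerivAt t hasDerivAt_lineMap).hasDerivWithinAt)
    (fun t ht => ((f' _).le_opNorm _).trans (by gcongr; exact hC t ht)) 1 ⟨zero_le_one, le_rfl⟩
  simpa using key

theorem exists_lineMap_mem_frontier {D : Set E} (hD : IsOpen D) {x y : E} (hx : x ∈ D)
    (hy : y ∉ D) : ∃ c ∈ Ioc (0 : ℝ) 1,
      lineMap x y c ∈ frontier D ∧ ∀ t ∈ Ico 0 c, lineMap x y t ∈ D := by
  have hT : IsCompact (Icc (0 : ℝ) 1 ∩ lineMap x y ⁻¹' Dᶜ) :=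
    isCompact_Icc.inter_right (hD.isClosed_compl.preimage lineMap_continuous)
  obtain ⟨c, ⟨hc, hcD⟩, hmin⟩ := hT.exists_isLeast ⟨1, ⟨zero_le_one, le_rfl⟩, by simpa⟩
  have hbefore : ∀ t ∈ Ico 0 c, lineMap x y t ∈ D := fun t ht => by
    by_contra h
    exact ht.2.not_ge (hmin ⟨⟨ht.1, ht.2.le.trans hc.2⟩, h⟩)
  have hc0 : c ≠ 0 := by
    rintro rfl
    exact hcD (by simpa using hx)
  refine ⟨c, ⟨hc.1.lt_of_ne' hc0, hc.2⟩, ?_, hbefore⟩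
  rw [hD.frontier_eq]
  refine ⟨?_, hcD⟩
  have hcl : lineMap x y c ∈ lineMap x y '' closure (Ico 0 c) := by
    rw [closure_Ico hc0.symm]
    exact mem_image_of_mem _ ⟨hc.1, le_rfl⟩
  exact closure_mono (image_subset_iff.2 hbefore)
    (image_closure_subset_closure_image lineMap_continuous hcl)

variable {D : Set E} {X : E → E} {X' : E → E →L[ℝ] E} {C : ℝ}

theorem norm_sub_self_le_of_notMem (hD : IsOpen D) (hXc : ContinuousOn X (closure D))
    (hX' : ∀ z ∈ D, HasFDerivAt X (X' z) z) (hC0 : 0 ≤ C) (hC : ∀ z ∈ D, ‖X' z‖ ≤ C)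
    (hXbd : ∀ z ∈ frontier D, X z = z) {x y : E} (hx : x ∈ closure D) (hy : y ∉ D) :
    ‖X x - x‖ ≤ (C + 1) * ‖y - x‖ := by
  by_cases hxD : x ∈ D
  swap
  · rw [hXbd x (by rw [hD.frontier_eq]; exact ⟨hx, hxD⟩), sub_self, norm_zero]
    positivity
  obtain ⟨c, hc, hp, hbefore⟩ := exists_lineMap_mem_frontier hD hxD hy
  set p := lineMap x y c
  have hin : ∀ t ∈ Ico (0 : ℝ) 1, lineMap x p t ∈ D := fun t ht => by
    rw [lineMap_lineMap_right]
    exact hbefore _ ⟨mul_nonneg ht.1 hc.1.le, mul_lt_of_lt_one_left hc.1 ht.2⟩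
  have hseg : segment ℝ x p ⊆ closure D := by
    rw [segment_eq_image_lineMap]
    rintro _ ⟨t, ht, rfl⟩
    rcases ht.2.lt_or_eq with ht1 | rfl
    · exact subset_closure (hin t ⟨ht.1, ht1⟩)
    · simpa using hp.1
  have hmvt : ‖X p - X x‖ ≤ C * ‖p - x‖ := norm_sub_le_of_hasFDerivAt_lineMap
    (hXc.mono hseg) (fun t ht => hX' _ (hin t ht)) (fun t ht => hC _ (hin t ht))
  have hpx : ‖p - x‖ ≤ ‖y - x‖ := by
    rw [← vsub_eq_sub, lineMap_vsub_left, norm_smul, Real.norm_of_nonneg hc.1.le]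
    exact mul_le_of_le_one_left (norm_nonneg _) hc.2
  calc ‖X x - x‖ = ‖(p - x) - (X p - X x)‖ := by rw [hXbd p hp]; abel_nf
    _ ≤ ‖p - x‖ + ‖X p - X x‖ := norm_sub_le _ _
    _ ≤ (C + 1) * ‖p - x‖ := by linarith
    _ ≤ (C + 1) * ‖y - x‖ := by gcongr

theorem norm_sub_self_sub_sub_self_le (hD : IsOpen D) (hXc : ContinuousOn X (closure D))
    (hX' : ∀ z ∈ D, HasFDerivAt X (X' z) z) (hC0 : 0 ≤ C) (hC : ∀ z ∈ D, ‖X' z‖ ≤ C)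
    (hXbd : ∀ z ∈ frontier D, X z = z) {x y : E} (hx : x ∈ closure D) (hy : y ∈ closure D) :
    ‖(X x - x) - (X y - y)‖ ≤ (C + 1) * ‖x - y‖ := by
  by_cases hseg : segment ℝ x y ⊆ D
  · have hin : ∀ t ∈ Ico (0 : ℝ) 1, lineMap x y t ∈ D := fun t ht =>
      hseg (lineMap_mem_segment ℝ x y ⟨ht.1, ht.2.le⟩)
    rw [← norm_neg, neg_sub, norm_sub_rev x]
    refine norm_sub_le_of_hasFDerivAt_lineMap (f' := fun z => X' z - ContinuousLinearMap.id ℝ E)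
      ((hXc.mono (hseg.trans subset_closure)).sub continuousOn_id)
      (fun t ht => (hX' _ (hin t ht)).sub (hasFDerivAt_id _)) fun t ht => ?_
    exact (norm_sub_le _ _).trans (add_le_add (hC _ (hin t ht)) ContinuousLinearMap.norm_id_le)
  obtain ⟨z, hz, hzD⟩ := not_subset.1 hseg
  have hsplit : ‖z - x‖ + ‖y - z‖ = ‖x - y‖ := by
    simpa [dist_eq_norm, norm_sub_rev] using dist_add_dist_of_mem_segment hz
  calc ‖(X x - x) - (X y - y)‖ ≤ ‖X x - x‖ + ‖X y - y‖ := norm_sub_le _ _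
    _ ≤ (C + 1) * ‖z - x‖ + (C + 1) * ‖z - y‖ := add_le_add
        (norm_sub_self_le_of_notMem hD hXc hX' hC0 hC hXbd hx hzD)
        (norm_sub_self_le_of_notMem hD hXc hX' hC0 hC hXbd hy hzD)
    _ = (C + 1) * ‖x - y‖ := by rw [← mul_add, norm_sub_rev z y, hsplit]

theorem injOn_add_smul_sub_self (hD : IsOpen D) (hXc : ContinuousOn X (closure D))
    (hX' : ∀ z ∈ D, HasFDerivAt X (X' z) z) (hC0 : 0 ≤ C) (hC : ∀ z ∈ D, ‖X' z‖ ≤ C)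
    (hXbd : ∀ z ∈ frontier D, X z = z) {s : ℝ} (hs : |s| * (C + 1) < 1) :
    InjOn (fun z => z + s • (X z - z)) (closure D) := by
  intro x hx y hy hxy
  have hdiff : x - y = s • ((X y - y) - (X x - x)) := by
    linear_combination (norm := module) hxy
  have hle : ‖x - y‖ ≤ |s| * (C + 1) * ‖x - y‖ := by
    calc ‖x - y‖ = |s| * ‖(X x - x) - (X y - y)‖ := by
          rw [hdiff, norm_smul, Real.norm_eq_abs, norm_sub_rev]
      _ ≤ |s| * ((C + 1) * ‖x - y‖) := by
          gcongr; exact norm_sub_self_sub_sub_self_le hD hXc hX' hC0 hC hXbd hx hy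
      _ = |s| * (C + 1) * ‖x - y‖ := by ring
  have : ‖x - y‖ = 0 := by nlinarith [norm_nonneg (x - y)]
  rwa [norm_eq_zero, sub_eq_zero] at this

theorem mapsTo_add_smul_sub_self (hD : IsOpen D) (hXc : ContinuousOn X (closure D))
    (hX' : ∀ z ∈ D, HasFDerivAt X (X' z) z) (hC0 : 0 ≤ C) (hC : ∀ z ∈ D, ‖X' z‖ ≤ C)
    (hXbd : ∀ z ∈ frontier D, X z = z) {s : ℝ} (hs : |s| * (C + 1) < 1) :
    MapsTo (fun z => z + s • (X z - z)) D D := by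
  intro x hx
  by_contra hout
  have hle : ‖X x - x‖ ≤ |s| * (C + 1) * ‖X x - x‖ := by
    calc ‖X x - x‖ ≤ (C + 1) * ‖(x + s • (X x - x)) - x‖ :=
          norm_sub_self_le_of_notMem hD hXc hX' hC0 hC hXbd (subset_closure hx) hout
      _ = |s| * (C + 1) * ‖X x - x‖ := by
          rw [add_sub_cancel_left, norm_smul, Real.norm_eq_abs]; ring
  have : ‖X x - x‖ = 0 := by nlinarith [norm_nonneg (X x - x)]
  rw [norm_eq_zero] at this
  simp [this, hx] at hout

end NormedSpace

theorem isOpen_image_of_hasStrictFDerivAt {E : Type*} [NormedAddCommGroup E] [NormedSpace ℝ E]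
    [FiniteDimensional ℝ E] {f : E → E} {f' : E → E →L[ℝ] E} {U : Set E} (hU : IsOpen U)
    (hf : ∀ x ∈ U, HasStrictFDerivAt f (f' x) x) (hdet : ∀ x ∈ U, (f' x).det ≠ 0) :
    IsOpen (f '' U) := by
  have := FiniteDimensional.complete ℝ E
  refine isOpen_iff_mem_nhds.2 ?_
  rintro _ ⟨x, hx, rfl⟩
  have hx' := hf x hx
  rw [← (f' x).coe_toContinuousLinearEquivOfDetNeZero (hdet x hx)] at hx'
  rw [← hx'.map_nhds_eq_of_equiv]
  exact Filter.image_mem_map (hU.mem_nhds hx)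

theorem ContinuousLinearMap.det_id_add_pos_of_norm_lt_one {E : Type*} [NormedAddCommGroup E]
    [NormedSpace ℝ E] [FiniteDimensional ℝ E] {f : E →L[ℝ] E} (hf : ‖f‖ < 1) :
    0 < (ContinuousLinearMap.id ℝ E + f).det := by
  have := FiniteDimensional.complete ℝ E
  have hne : ∀ σ ∈ Icc (0 : ℝ) 1, (ContinuousLinearMap.id ℝ E + σ • f).det ≠ 0 := by
    intro σ hσ
    have hσf : ‖-(σ • f)‖ < 1 := by
      rw [norm_neg, norm_smul, Real.norm_of_nonneg hσ.1]
      exact (mul_le_of_le_one_left (norm_nonneg _) hσ.2).trans_lt hf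
    have hunit : IsUnit (ContinuousLinearMap.id ℝ E + σ • f) := by
      simpa [ContinuousLinearMap.one_def] using (Units.oneSub _ hσf).isUnit
    exact ((hunit.map ContinuousLinearMap.toLinearMapRingHom).map LinearMap.det).ne_zero
  have hcont : Continuous fun σ : ℝ => (ContinuousLinearMap.id ℝ E + σ • f).det :=
    ContinuousLinearMap.continuous_det.comp
      (continuous_const.add (continuous_id.smul continuous_const))
  by_contra hle
  push Not at hle
  obtain ⟨σ, hσ, hzero⟩ := intermediate_value_Icc' zero_le_one hcont.continuousOn
    ⟨by simpa using hle, by simp [ContinuousLinearMap.det]⟩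
  exact hne σ hσ hzero

theorem image_eq_self_of_isOpen_image {α : Type*} [TopologicalSpace α] [T2Space α] {D : Set α}
    {g : α → α} (hD : IsOpen D) (hDc : IsConnected D) (hDcl : IsCompact (closure D))
    (hg : ContinuousOn g (closure D)) (hgbd : ∀ x ∈ frontier D, g x = x) (hmaps : MapsTo g D D)
    (hopen : IsOpen (g '' D)) : g '' D = D := by
  refine hmaps.image_subset.antisymm
    (hDc.isPreconnected.subset_of_closure_inter_subset hopen ?_ ?_)
  · obtain ⟨x, hx⟩ := hDc.nonempty
    exact ⟨g x, hmaps hx, x, hx, rfl⟩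
  rintro y ⟨hy, hyD⟩
  have hcl : closure (g '' D) ⊆ g '' closure D :=
    closure_minimal (image_mono subset_closure) (hDcl.image_of_continuousOn hg).isClosed
  obtain ⟨x, hx, rfl⟩ := hcl hy
  by_cases hxD : x ∈ D
  · exact mem_image_of_mem g hxD
  · rw [hgbd x (by rw [hD.frontier_eq]; exact ⟨hx, hxD⟩)] at hyD
    exact absurd hyD hxD

open Polynomial in
theorem ContinuousLinearMap.exists_natDegree_le_eval_eq_det_id_add_smul {E : Type*}
    [NormedAddCommGroup E] [NormedSpace ℝ E] [FiniteDimensional ℝ E] (f : E →L[ℝ] E) :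
    ∃ p : ℝ[X], p.natDegree ≤ Module.finrank ℝ E ∧
      ∀ s : ℝ, p.eval s = (ContinuousLinearMap.id ℝ E + s • f).det := by
  let b := Module.finBasis ℝ E
  let A := LinearMap.toMatrix b b f
  refine ⟨((X : ℝ[X]) • A.map C + (1 : Matrix _ _ ℝ).map C).det, ?_, fun s => ?_⟩
  · simpa using natDegree_det_X_add_C_le A 1
  · rw [ContinuousLinearMap.det, ← LinearMap.det_toMatrix b, ContinuousLinearMap.toLinearMap_add,
      ContinuousLinearMap.toLinearMap_smul, ContinuousLinearMap.coe_id, map_add,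
      map_smul, LinearMap.toMatrix_id, ← coe_evalRingHom, RingHom.map_det]
    congr 1
    ext i j
    by_cases hij : i = j <;> simp [A, hij] <;> ring

open Polynomial in
theorem integral_eq_of_polynomial_of_eq_on_infinite {α : Type*} [MeasurableSpace α]
    {μ : Measure α} {F : α → ℝ → ℝ} {n : ℕ}
    (hF : ∀ a, ∃ p : ℝ[X], p.natDegree ≤ n ∧ ∀ s, p.eval s = F a s) {S : Set ℝ}
    (hS : S.Infinite) {c : ℝ} (hint : ∀ s ∈ S, Integrable (fun a => F a s) μ)
    (hc : ∀ s ∈ S, ∫ a, F a s ∂μ = c) (t : ℝ) :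
    ∫ a, F a t ∂μ = c := by
  choose P hPdeg hPF using hF
  obtain ⟨T, hTS, hTcard⟩ := hS.exists_subset_card_eq (n + 1)
  have hinterp : ∀ a, F a t = ∑ s ∈ T, (Lagrange.basis T id s).eval t * F a s := by
    intro a
    have hdeg : (P a).degree < T.card :=
      degree_le_natDegree.trans_lt (by rw [hTcard]; exact_mod_cast Nat.lt_succ_of_le (hPdeg a))
    rw [← hPF, Lagrange.eq_interpolate (injOn_id _) hdeg]
    simp [Lagrange.interpolate_apply, eval_finsetSum, mul_comm, hPF]
  calc ∫ a, F a t ∂μ = ∑ s ∈ T, (Lagrange.basis T id s).eval t * ∫ a, F a s ∂μ := by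
        simp_rw [hinterp, ← integral_const_mul]
        exact integral_finsetSum _ fun s hs => (hint s (hTS hs)).const_mul _
    _ = c := by
        rw [Finset.sum_congr rfl fun s hs => by rw [hc s (hTS hs)], ← Finset.sum_mul,
          ← eval_finsetSum, Lagrange.sum_basis (injOn_id _) (Finset.card_pos.1 (by omega)),
          eval_one, one_mul]

theorem integrableOn_det_id_add_smul_sub_and_integral_eq {E : Type*} [NormedAddCommGroup E]
    [NormedSpace ℝ E] [FiniteDimensional ℝ E] [MeasurableSpace E] [BorelSpace E]
    (μ : Measure E) [μ.IsAddHaarMeasure] {D : Set E} {X : E → E} {X' : E → E →L[ℝ] E} {C : ℝ}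
    (hD : IsOpen D) (hDc : IsConnected D) (hDcl : IsCompact (closure D))
    (hXc : ContinuousOn X (closure D)) (hX' : ∀ z ∈ D, HasStrictFDerivAt X (X' z) z)
    (hC0 : 0 ≤ C) (hC : ∀ z ∈ D, ‖X' z‖ ≤ C) (hXbd : ∀ z ∈ frontier D, X z = z) {s : ℝ}
    (hs : |s| * (C + 1) < 1) :
    IntegrableOn (fun z => (ContinuousLinearMap.id ℝ E + s • (X' z - .id ℝ E)).det) D μ ∧
      ∫ z in D, (ContinuousLinearMap.id ℝ E + s • (X' z - .id ℝ E)).det ∂μ = μ.real D := by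
  set g : E → E := fun z => z + s • (X z - z)
  set g' : E → E →L[ℝ] E := fun z => .id ℝ E + s • (X' z - .id ℝ E)
  have hX'' : ∀ z ∈ D, HasFDerivAt X (X' z) z := fun z hz => (hX' z hz).hasFDerivAt
  have hg' : ∀ z ∈ D, HasStrictFDerivAt g (g' z) z := fun z hz =>
    (hasStrictFDerivAt_id z).add (((hX' z hz).sub (hasStrictFDerivAt_id z)).const_smul s)
  have hpos : ∀ z ∈ D, 0 < (g' z).det := fun z hz => by
    refine ContinuousLinearMap.det_id_add_pos_of_norm_lt_one (lt_of_le_of_lt ?_ hs)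
    rw [norm_smul, Real.norm_eq_abs]
    gcongr
    exact (norm_sub_le _ _).trans (add_le_add (hC z hz) ContinuousLinearMap.norm_id_le)
  have himg : g '' D = D := image_eq_self_of_isOpen_image hD hDc hDcl
    (continuousOn_id.add ((hXc.sub continuousOn_id).const_smul s))
    (fun z hz => by simp [g, hXbd z hz])
    (mapsTo_add_smul_sub_self hD hXc hX'' hC0 hC hXbd hs)
    (isOpen_image_of_hasStrictFDerivAt hD hg' fun z hz => (hpos z hz).ne')
  have hinj : InjOn g D :=
    (injOn_add_smul_sub_self hD hXc hX'' hC0 hC hXbd hs).mono subset_closure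
  have hg'D : ∀ z ∈ D, HasFDerivWithinAt g (g' z) D z := fun z hz =>
    (hg' z hz).hasFDerivAt.hasFDerivWithinAt
  have habs : EqOn (fun z => |(g' z).det| • (1 : ℝ)) (fun z => (g' z).det) D := fun z hz => by
    simp [abs_of_pos (hpos z hz)]
  have hμD : μ D < ∞ := (measure_mono subset_closure).trans_lt hDcl.measure_lt_top
  constructor
  · refine IntegrableOn.congr_fun ?_ habs hD.measurableSet
    refine (integrableOn_image_iff_integrableOn_abs_det_fderiv_smul μ hD.measurableSet hg'D hinj
      fun _ => (1 : ℝ)).1 ?_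
    rw [himg]
    exact integrableOn_const hμD.ne
  · calc ∫ z in D, (g' z).det ∂μ = ∫ z in D, |(g' z).det| • (1 : ℝ) ∂μ :=
          (setIntegral_congr_fun hD.measurableSet habs).symm
      _ = ∫ z in g '' D, (1 : ℝ) ∂μ :=
          (integral_image_eq_integral_abs_det_fderiv_smul μ hD.measurableSet hg'D hinj
            fun _ => (1 : ℝ)).symm
      _ = μ.real D := by rw [himg, setIntegral_const, smul_eq_mul, mul_one]

theorem volume_eq_integral_det_jacobian_general {d : ℕ}
    (D : Set (EuclideanSpace ℝ (Fin d)))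
    (hDo : IsOpen D) (hDb : Bornology.IsBounded D) (hDc : IsConnected D)
    (X : EuclideanSpace ℝ (Fin d) → EuclideanSpace ℝ (Fin d))
    (hXc : ContinuousOn X (closure D))
    (hX1 : ContDiffOn ℝ 1 X D)
    (hXder : ∃ C : ℝ, ∀ x ∈ D, ‖fderiv ℝ X x‖ ≤ C)
    (hXbd : ∀ x ∈ frontier D, X x = x) :
    volume D = ENNReal.ofReal (∫ x in D, (fderiv ℝ X x).det) := by
  obtain ⟨C, hC⟩ := hXder
  have hC0 : 0 ≤ C := (norm_nonneg _).trans (hC _ hDc.nonempty.some_mem)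
  have hX' : ∀ z ∈ D, HasStrictFDerivAt X (fderiv ℝ X z) z := fun z hz =>
    (hX1.contDiffAt (hDo.mem_nhds hz)).hasStrictFDerivAt one_ne_zero
  have hsmall : ∀ s ∈ Ioo 0 (C + 1)⁻¹, |s| * (C + 1) < 1 := fun s hs => by
    rw [abs_of_pos hs.1, ← lt_div_iff₀ (by positivity), one_div]
    exact hs.2
  have key := fun s hs => integrableOn_det_id_add_smul_sub_and_integral_eq volume hDo hDc
    hDb.isCompact_closure hXc hX' hC0 hC hXbd (hsmall s hs)
  have hpoly := fun z =>
    (fderiv ℝ X z - .id ℝ (EuclideanSpace ℝ (Fin d))).exists_natDegree_le_eval_eq_det_id_add_smul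
  have h1 := integral_eq_of_polynomial_of_eq_on_infinite (μ := volume.restrict D) hpoly
    (S := Ioo 0 (C + 1)⁻¹) (Ioo_infinite (inv_pos.2 (by positivity)))
    (fun s hs => (key s hs).1) (fun s hs => (key s hs).2) 1
  simp only [one_smul, add_sub_cancel] at h1
  rw [h1, measureReal_def, ENNReal.ofReal_toReal hDb.measure_lt_top.ne]

/-- Let `D ⊂ ℝ^d` be a bounded open connected set and
`X : closure D → closure D` continuous, `C¹` on `D` with bounded continuous first
derivatives, `X = id` on `∂D`, `det DX ≥ 0` on `D`, and `X` a local homeomorphism at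
every point of `D`.  Then `Vol D = ∫_D det DX(x) dx`. -/
theorem volume_eq_integral_det_jacobian {d : ℕ}
    (D : Set (EuclideanSpace ℝ (Fin d)))
    (hDo : IsOpen D) (hDb : Bornology.IsBounded D) (hDc : IsConnected D)
    (X : EuclideanSpace ℝ (Fin d) → EuclideanSpace ℝ (Fin d))
    (hXc : ContinuousOn X (closure D))
    (hXmaps : Set.MapsTo X (closure D) (closure D))
    (hX1 : ContDiffOn ℝ 1 X D)
    (hXder : ∃ C : ℝ, ∀ x ∈ D, ‖fderiv ℝ X x‖ ≤ C)
    (hXbd : ∀ x ∈ frontier D, X x = x)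
    (hdet : ∀ x ∈ D, 0 ≤ (fderiv ℝ X x).det)
    (hloc : ∀ x₀ ∈ D, ∃ e : PartialHomeomorph (EuclideanSpace ℝ (Fin d))
        (EuclideanSpace ℝ (Fin d)),
        x₀ ∈ e.source ∧ e.source ⊆ D ∧ Set.EqOn X e e.source) :
    volume D = ENNReal.ofReal (∫ x in D, (fderiv ℝ X x).det) :=
  volume_eq_integral_det_jacobian_general D hDo hDb hDc X hXc hX1 hXder hXbd
end

section
/- Let D be a bounded open set in ℝ^d and X : closure(D) → ℝ^d continuous, C¹ on D, with sup_{x∈D} ‖DX(x)‖ ≤ N₀ and X(x) = x for all x ∈ ∂D. Then X is Lipschitz continuous on closure(D) with Lipschitz constant at most N₀ + 1. -/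
/-!
For `x, y ∈ D` with `[x, y] ⊄ D`, pick `z ∈ [x, y] \ D` and let `p`, `q` be the first points of
`∂D` met when walking from `x`, resp. `y`, towards `z`. The half-open segments `[x, p)` and
`[y, q)` lie in `D`, so the mean value inequality (with continuity at the endpoint) bounds
`‖X p - X x‖` and `‖X q - X y‖` by `N₀` times the lengths, while `X p - X q = p - q` because `X`
fixes `∂D`. As `p ∈ [x, z]` and `q ∈ [z, y]`, the three lengths add up to at most `‖y - x‖`.
The bound passes from `D` to its closure by continuity.
-/

open Set NNReal

theorem IsOpen.exists_first_exit_frontier {α : Type*} [TopologicalSpace α] {U : Set α}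
    {γ : ℝ → α} (hU : IsOpen U) (hγ : Continuous γ) (h0 : γ 0 ∈ U) (h1 : γ 1 ∉ U) :
    ∃ T ∈ Ioc (0 : ℝ) 1, γ T ∈ frontier U ∧ ∀ t ∈ Ico 0 T, γ t ∈ U := by
  set S := Icc (0 : ℝ) 1 ∩ γ ⁻¹' Uᶜ
  have hS : IsClosed S := isClosed_Icc.inter (hU.isClosed_compl.preimage hγ)
  have hSne : S.Nonempty := ⟨1, right_mem_Icc.2 zero_le_one, h1⟩
  have hSbdd : BddBelow S := ⟨0, fun t ht => ht.1.1⟩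
  obtain ⟨⟨hT0, hT1⟩, hTU⟩ : sInf S ∈ S := hS.csInf_mem hSne hSbdd
  have hpos : 0 < sInf S := hT0.lt_of_ne fun h => hTU (h ▸ h0)
  have hbefore : ∀ t ∈ Ico 0 (sInf S), γ t ∈ U := fun t ht => by_contra fun htU =>
    (csInf_le hSbdd ⟨⟨ht.1, ht.2.le.trans hT1⟩, htU⟩).not_gt ht.2
  have hcl : γ (sInf S) ∈ closure U := by
    have hT : sInf S ∈ closure (Ico 0 (sInf S)) := by
      rw [closure_Ico hpos.ne]
      exact right_mem_Icc.2 hT0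
    exact closure_mono (image_subset_iff.2 hbefore)
      (hγ.continuousWithinAt.mem_closure_image hT)
  exact ⟨sInf S, ⟨hpos, hT1⟩, hU.frontier_eq ▸ ⟨hcl, hTU⟩, hbefore⟩

theorem LipschitzOnWith.closure_of_continuousOn {α β : Type*} [PseudoMetricSpace α]
    [PseudoMetricSpace β] {f : α → β} {K : ℝ≥0} {s : Set α} (hf : LipschitzOnWith K f s)
    (hc : ContinuousOn f (closure s)) : LipschitzOnWith K f (closure s) := by
  set A := closure s ×ˢ closure s
  have hA : IsClosed (A ∩ (fun p : α × α => (dist (f p.1) (f p.2), K * dist p.1 p.2)) ⁻¹'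
      {r | r.1 ≤ r.2}) := by
    refine ContinuousOn.preimage_isClosed_of_isClosed ?_ (isClosed_closure.prod isClosed_closure)
      (isClosed_le continuous_fst continuous_snd)
    exact (continuous_dist.comp_continuousOn ((hc.comp continuousOn_fst mapsTo_fst_prod).prodMk
      (hc.comp continuousOn_snd mapsTo_snd_prod))).prodMk
      (continuous_dist.continuousOn.const_smul (K : ℝ))
  have hsub : s ×ˢ s ⊆ A ∩ _ := fun p (hp : p ∈ s ×ˢ s) =>
    ⟨⟨subset_closure hp.1, subset_closure hp.2⟩, hf.dist_le_mul _ hp.1 _ hp.2⟩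
  refine LipschitzOnWith.of_dist_le_mul fun x hx y hy => ?_
  have hxy : (x, y) ∈ closure (s ×ˢ s) := closure_prod_eq (s := s) (t := s) ▸ ⟨hx, hy⟩
  exact (hA.closure_subset_iff.2 hsub hxy).2

section MeanValue

variable {E F : Type*} [NormedAddCommGroup E] [NormedSpace ℝ E]
  [NormedAddCommGroup F] [NormedSpace ℝ F]

theorem dist_apply_lineMap_le_of_norm_fderiv_le {f : E → F} {C T : ℝ} {x z : E} (hT : 0 ≤ T)
    (hc : ContinuousOn (f ∘ AffineMap.lineMap x z) (Icc 0 T))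
    (hd : ∀ t ∈ Ico 0 T, DifferentiableAt ℝ f (AffineMap.lineMap x z t))
    (hb : ∀ t ∈ Ico 0 T, ‖fderiv ℝ f (AffineMap.lineMap x z t)‖ ≤ C) :
    dist (f x) (f (AffineMap.lineMap x z T)) ≤ C * dist x (AffineMap.lineMap x z T) := by
  have hderiv : ∀ t ∈ Ico 0 T, HasDerivWithinAt (f ∘ AffineMap.lineMap x z)
      (fderiv ℝ f (AffineMap.lineMap x z t) (z - x)) (Ici t) t := fun t ht =>
    ((hd t ht).hasFDerivAt.comp_hasDerivAt t AffineMap.hasDerivAt_lineMap).hasDerivWithinAt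
  have hbound : ∀ t ∈ Ico 0 T, ‖fderiv ℝ f (AffineMap.lineMap x z t) (z - x)‖ ≤ C * ‖z - x‖ :=
    fun t ht => (ContinuousLinearMap.le_opNorm _ _).trans (by gcongr; exact hb t ht)
  have := norm_image_sub_le_of_norm_deriv_right_le_segment hc hderiv hbound T
    (right_mem_Icc.2 hT)
  rw [dist_comm, dist_eq_norm, dist_left_lineMap, Real.norm_of_nonneg hT, dist_eq_norm']
  simpa [mul_comm T, mul_assoc] using this

theorem exists_mem_segment_frontier_dist_le {D : Set E} {X : E → F} {C : ℝ}
    (hD : IsOpen D) (hXc : ContinuousOn X (closure D))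
    (hX1 : ∀ x ∈ D, DifferentiableAt ℝ X x) (hXd : ∀ x ∈ D, ‖fderiv ℝ X x‖ ≤ C)
    {x z : E} (hx : x ∈ D) (hz : z ∉ D) :
    ∃ p ∈ segment ℝ x z, p ∈ frontier D ∧ dist (X x) (X p) ≤ C * dist x p := by
  have hγ : Continuous (AffineMap.lineMap x z : ℝ → E) := AffineMap.lineMap_continuous
  obtain ⟨T, ⟨hT0, hT1⟩, hTfr, hbefore⟩ :=
    hD.exists_first_exit_frontier hγ (by simpa using hx) (by simpa using hz)
  have hclosure : MapsTo (AffineMap.lineMap x z) (Icc 0 T) (closure D) := fun t ht =>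
    (eq_or_lt_of_le ht.2).elim (fun h => h ▸ frontier_subset_closure hTfr)
      fun h => subset_closure (hbefore t ⟨ht.1, h⟩)
  refine ⟨_, segment_eq_image_lineMap ℝ x z ▸ mem_image_of_mem _ ⟨hT0.le, hT1⟩, hTfr,
    dist_apply_lineMap_le_of_norm_fderiv_le hT0.le (hXc.comp hγ.continuousOn hclosure)
      (fun t ht => hX1 _ (hbefore t ht)) (fun t ht => hXd _ (hbefore t ht))⟩

theorem lipschitzOnWith_add_one_of_norm_fderiv_le_of_frontier_fixed {D : Set E} {X : E → E}
    {N₀ : ℝ≥0} (hD : IsOpen D) (hXc : ContinuousOn X (closure D))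
    (hX1 : ∀ x ∈ D, DifferentiableAt ℝ X x) (hXd : ∀ x ∈ D, ‖fderiv ℝ X x‖ ≤ N₀)
    (hXb : ∀ x ∈ frontier D, X x = x) : LipschitzOnWith (N₀ + 1) X D := by
  refine LipschitzOnWith.of_dist_le_mul fun x hx y hy => ?_
  push_cast
  by_cases hseg : segment ℝ x y ⊆ D
  · have := (convex_segment x y).norm_image_sub_le_of_norm_fderiv_le
      (fun w hw => hX1 w (hseg hw)) (fun w hw => hXd w (hseg hw))
      (right_mem_segment ℝ x y) (left_mem_segment ℝ x y)
    rw [dist_eq_norm, dist_eq_norm]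
    exact this.trans (by gcongr; simp)
  obtain ⟨z, hzseg, hz⟩ := not_subset.1 hseg
  obtain ⟨p, hp, hpfr, hxp⟩ := exists_mem_segment_frontier_dist_le hD hXc hX1 hXd hx hz
  obtain ⟨q, hq, hqfr, hyq⟩ := exists_mem_segment_frontier_dist_le hD hXc hX1 hXd hy hz
  have hpath : dist x p + dist p q + dist q y ≤ dist x y := by
    have hpz := dist_add_dist_of_mem_segment hp
    have hqz := dist_add_dist_of_mem_segment hq
    have hxy := dist_add_dist_of_mem_segment hzseg
    linarith [dist_triangle p z q, dist_comm q y, dist_comm z q, dist_comm y z]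
  calc dist (X x) (X y) ≤ dist (X x) (X p) + dist p q + dist (X q) (X y) := by
        simpa only [hXb p hpfr, hXb q hqfr] using dist_triangle4 (X x) (X p) (X q) (X y)
    _ ≤ N₀ * dist x p + dist p q + N₀ * dist q y := by
        rw [dist_comm (X q), dist_comm q]
        gcongr
    _ ≤ (N₀ + 1) * (dist x p + dist p q + dist q y) := by
        linarith [mul_nonneg N₀.coe_nonneg (dist_nonneg (x := p) (y := q)),
          dist_nonneg (x := x) (y := p), dist_nonneg (x := q) (y := y)]
    _ ≤ (N₀ + 1) * dist x y := by gcongr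

end MeanValue

theorem lipschitz_of_bounded_deriv_and_identity_on_boundary_general {d : ℕ}
    (D : Set (EuclideanSpace ℝ (Fin d))) (hD : IsOpen D)
    (X : EuclideanSpace ℝ (Fin d) → EuclideanSpace ℝ (Fin d)) (N₀ : NNReal)
    (hXc : ContinuousOn X (closure D))
    (hX1 : ∀ x ∈ D, DifferentiableAt ℝ X x)
    (hXd : ∀ x ∈ D, ‖fderiv ℝ X x‖ ≤ (N₀ : ℝ))
    (hXb : ∀ x ∈ frontier D, X x = x) :
    LipschitzOnWith (N₀ + 1) X (closure D) :=
  (lipschitzOnWith_add_one_of_norm_fderiv_le_of_frontier_fixed hD hXc hX1 hXd hXb)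
    |>.closure_of_continuousOn hXc

/-- If `D ⊂ ℝ^d` is bounded and open, `X : closure D → ℝ^d` is continuous,
`C¹` on `D` with `‖DX‖ ≤ N₀` on `D`, and `X x = x` on `∂D`, then `X` is Lipschitz
continuous on `closure D` with Lipschitz constant at most `N₀ + 1`. -/
theorem lipschitz_of_bounded_deriv_and_identity_on_boundary {d : ℕ}
    (D : Set (EuclideanSpace ℝ (Fin d))) (hD : IsOpen D) (hDb : Bornology.IsBounded D)
    (X : EuclideanSpace ℝ (Fin d) → EuclideanSpace ℝ (Fin d)) (N₀ : NNReal)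
    (hXc : ContinuousOn X (closure D))
    (hX1 : ∀ x ∈ D, DifferentiableAt ℝ X x)
    (hXd : ∀ x ∈ D, ‖fderiv ℝ X x‖ ≤ (N₀ : ℝ))
    (hXb : ∀ x ∈ frontier D, X x = x) :
    LipschitzOnWith (N₀ + 1) X (closure D) :=
  lipschitz_of_bounded_deriv_and_identity_on_boundary_general D hD X N₀ hXc hX1 hXd hXb
end

section
/- Let X : ℝ^d → ℝ^d be a C¹ map such that |DX(x)ξ| ≥ δ|ξ| for some δ > 0, all x ∈ ℝ^d and all ξ ∈ ℝ^d, and suppose X(x) = x for |x| ≥ R. Then X is one-to-one and onto ℝ^d. -/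
/-! The lower bound on `DX` makes every derivative invertible, so by the inverse function theorem
`X` is a local homeomorphism; being the identity outside a ball, it is also proper. A proper local
homeomorphism is a covering map, and a covering of the simply connected space `ℝ^d` by a connected
space is a bijection. -/

open Filter Bornology Function

theorem ContinuousLinearMap.injective_of_mul_norm_le {𝕜 E F : Type*} [NontriviallyNormedField 𝕜]
    [NormedAddCommGroup E] [NormedSpace 𝕜 E] [NormedAddCommGroup F] [NormedSpace 𝕜 F]
    {L : E →L[𝕜] F} {δ : ℝ} (hδ : 0 < δ) (h : ∀ ξ, δ * ‖ξ‖ ≤ ‖L ξ‖) : Injective L := by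
  refine (injective_iff_map_eq_zero L).mpr fun ξ hξ => norm_le_zero_iff.mp ?_
  have hδξ : δ * ‖ξ‖ ≤ δ * 0 := by simpa [hξ] using h ξ
  exact le_of_mul_le_mul_left hδξ hδ

theorem isLocalHomeomorph_of_hasStrictFDerivAt {𝕜 E F : Type*} [NontriviallyNormedField 𝕜]
    [NormedAddCommGroup E] [NormedSpace 𝕜 E] [CompleteSpace E]
    [NormedAddCommGroup F] [NormedSpace 𝕜 F] [CompleteSpace F]
    {f : E → F} {f' : E → E ≃L[𝕜] F} (hf : ∀ x, HasStrictFDerivAt f (f' x : E →L[𝕜] F) x) :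
    IsLocalHomeomorph f :=
  IsLocalHomeomorph.mk f fun x =>
    ⟨(hf x).toOpenPartialHomeomorph f, (hf x).mem_toOpenPartialHomeomorph_source, fun _ _ => rfl⟩

theorem ContDiff.isLocalHomeomorph_of_injective_fderiv {𝕜 E : Type*} [RCLike 𝕜]
    [NormedAddCommGroup E] [NormedSpace 𝕜 E] [FiniteDimensional 𝕜 E] {f : E → E}
    (hf : ContDiff 𝕜 1 f) (hinj : ∀ x, Injective (fderiv 𝕜 f x)) : IsLocalHomeomorph f := by
  have := FiniteDimensional.complete 𝕜 E
  have hsurj (x : E) : Surjective (fderiv 𝕜 f x) :=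
    LinearMap.injective_iff_surjective.mp (hinj x)
  refine isLocalHomeomorph_of_hasStrictFDerivAt (f' := fun x =>
    .ofBijective (fderiv 𝕜 f x) (LinearMap.ker_eq_bot.mpr (hinj x))
      (LinearMap.range_eq_top.mpr (hsurj x))) fun x => ?_
  rw [ContinuousLinearEquiv.coe_ofBijective]
  exact hf.hasStrictFDerivAt one_ne_zero

theorem isProperMap_of_eventuallyEq_id_cobounded {E : Type*} [MetricSpace E] [ProperSpace E]
    {f : E → E} (hf : Continuous f) (hid : f =ᶠ[cobounded E] id) : IsProperMap f := by
  rw [isProperMap_iff_tendsto_cocompact, ← Metric.cobounded_eq_cocompact]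
  exact ⟨hf, tendsto_id.congr' hid.symm⟩

theorem IsLocalHomeomorph.isCoveringMap_of_isProperMap {E X : Type*} [TopologicalSpace E]
    [TopologicalSpace X] [T2Space E] {f : E → X} (hf : IsLocalHomeomorph f)
    (hp : IsProperMap f) : IsCoveringMap f := by
  rw [isCoveringMap_iff_isCoveringMapOn_univ]
  refine hp.isClosedMap.isCoveringMapOn_of_isLocalHomeomorphOn (fun x _ => ?_)
    (by simpa using hf.isLocalHomeomorphOn)
  exact (hp.isCompact_preimage isCompact_singleton).finite
    (IsDiscrete.of_openPartialHomeomorph f subset_rfl fun e _ =>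
      let ⟨φ, he, hfφ⟩ := hf e; ⟨φ, he, hfφ.symm⟩)

/-- The lift `s` of the identity of `X` through `p` is a section of `p`, and `s ∘ p = id` since
both are lifts of `p` that agree at one point. -/
theorem IsCoveringMap.bijective_of_simplyConnectedSpace {E X : Type*} [TopologicalSpace E]
    [TopologicalSpace X] [PreconnectedSpace E] [Nonempty E] [SimplyConnectedSpace X]
    [LocallyPathConnectedSpace X] {p : E → X} (hp : IsCoveringMap p) : Bijective p := by
  obtain ⟨e⟩ := ‹Nonempty E›
  obtain ⟨s, ⟨hse, hps⟩, -⟩ :=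
    hp.existsUnique_continuousMap_lifts (ContinuousMap.id X) (p e) e rfl
  have hsp : s ∘ p = id :=
    hp.eq_of_comp_eq (s.continuous.comp hp.continuous) continuous_id
      (by rw [← comp_assoc, hps]; rfl) e hse
  exact bijective_iff_has_inverse.mpr ⟨s, congrFun hsp, congrFun hps⟩

theorem bijective_of_nondegenerate_jacobian_identity_outside_ball_general {d : ℕ}
    (X : EuclideanSpace ℝ (Fin d) → EuclideanSpace ℝ (Fin d)) (δ R : ℝ)
    (hδ : 0 < δ)
    (hX : ContDiff ℝ 1 X)
    (hlow : ∀ x ξ, δ * ‖ξ‖ ≤ ‖fderiv ℝ X x ξ‖)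
    (hid : ∀ x, R ≤ ‖x‖ → X x = x) :
    Function.Bijective X := by
  have hlocal : IsLocalHomeomorph X :=
    hX.isLocalHomeomorph_of_injective_fderiv fun x =>
      (fderiv ℝ X x).injective_of_mul_norm_le hδ (hlow x)
  have hproper : IsProperMap X :=
    isProperMap_of_eventuallyEq_id_cobounded hX.continuous
      ((tendsto_norm_cobounded_atTop.eventually_ge_atTop R).mono hid)
  exact (hlocal.isCoveringMap_of_isProperMap hproper).bijective_of_simplyConnectedSpace

/-- If `X : ℝ^d → ℝ^d` is `C¹`, `|DX(x)ξ| ≥ δ|ξ|` for some `δ > 0` and all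
`x, ξ`, and `X x = x` for `|x| ≥ R`, then `X` is one-to-one and onto `ℝ^d`. -/
theorem bijective_of_nondegenerate_jacobian_identity_outside_ball {d : ℕ}
    (X : EuclideanSpace ℝ (Fin d) → EuclideanSpace ℝ (Fin d)) (δ R : ℝ)
    (hδ : 0 < δ) (hR : 0 < R)
    (hX : ContDiff ℝ 1 X)
    (hlow : ∀ x ξ, δ * ‖ξ‖ ≤ ‖fderiv ℝ X x ξ‖)
    (hid : ∀ x, R ≤ ‖x‖ → X x = x) :
    Function.Bijective X :=
  bijective_of_nondegenerate_jacobian_identity_outside_ball_general X δ R hδ hX hlow hid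
end
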